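/- arXiv:1508.03277 — 4 statements merged into one kernel-verified Lean document; each statement's English description precedes it below -/
import Mathlib

section
/- For all a, b, c, d > 0 and all x, y ≥ 0 with c·x² + d·y² = 1, we have x^a · y^b ≤ (a/c)^{a/2} · (b/d)^{b/2} / (a+b)^{(a+b)/2}. -/
/-!
Homogeneous weighted AM-GM: with `s = p + q`, applying AM-GM with weights `p/s`, `q/s` to
`u / (p/s)` and `v / (q/s)` and raising to the power `s` gives
`u ^ p * v ^ q ≤ (p/s) ^ p * (q/s) ^ q * (u + v) ^ s`.
For `u = c x²`, `v = d y²`, `p = a/2`, `q = b/2` the right side is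
`(a/(a+b)) ^ (a/2) * (b/(a+b)) ^ (b/2)`, and dividing by `c ^ (a/2) * d ^ (b/2)` gives the bound.
-/

open Real

namespace Real

theorem rpow_mul_rpow_le_mul_add_rpow {p q u v : ℝ} (hp : 0 < p) (hq : 0 < q)
    (hu : 0 ≤ u) (hv : 0 ≤ v) :
    u ^ p * v ^ q ≤ (p / (p + q)) ^ p * (q / (p + q)) ^ q * (u + v) ^ (p + q) := by
  have hs : 0 < p + q := by linarith
  set wp := p / (p + q)
  set wq := q / (p + q)
  have hwp : 0 < wp := by positivity
  have hwq : 0 < wq := by positivity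
  have amgm : (u / wp) ^ wp * (v / wq) ^ wq ≤ u + v := by
    have h := geom_mean_le_arith_mean2_weighted hwp.le hwq.le (div_nonneg hu hwp.le)
      (div_nonneg hv hwq.le) (by rw [← add_div, div_self hs.ne'])
    rwa [mul_div_cancel₀ _ hwp.ne', mul_div_cancel₀ _ hwq.ne'] at h
  have powered : (u / wp) ^ p * (v / wq) ^ q ≤ (u + v) ^ (p + q) := by
    have h := rpow_le_rpow (by positivity) amgm hs.le
    rwa [mul_rpow (by positivity) (by positivity), ← rpow_mul (by positivity),
      ← rpow_mul (by positivity), div_mul_cancel₀ _ hs.ne',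
      div_mul_cancel₀ _ hs.ne'] at h
  calc u ^ p * v ^ q = wp ^ p * wq ^ q * ((u / wp) ^ p * (v / wq) ^ q) := by
        rw [div_rpow hu hwp.le, div_rpow hv hwq.le]
        field_simp
    _ ≤ wp ^ p * wq ^ q * (u + v) ^ (p + q) := by gcongr

theorem mul_sq_rpow_half {c x : ℝ} (hc : 0 ≤ c) (hx : 0 ≤ x) (a : ℝ) :
    (c * x ^ 2) ^ (a / 2) = c ^ (a / 2) * x ^ a := by
  rw [mul_rpow hc (by positivity), ← rpow_two, ← rpow_mul hx, mul_div_cancel₀ _ two_ne_zero]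

end Real

theorem stmt_1 (a b c d : ℝ) (ha : 0 < a) (hb : 0 < b) (hc : 0 < c) (hd : 0 < d)
    (x y : ℝ) (hx : 0 ≤ x) (hy : 0 ≤ y) (hcon : c * x ^ 2 + d * y ^ 2 = 1) :
    x ^ a * y ^ b ≤ (a / c) ^ (a / 2) * (b / d) ^ (b / 2) / (a + b) ^ ((a + b) / 2) := by
  have key := rpow_mul_rpow_le_mul_add_rpow (half_pos ha) (half_pos hb)
    (by positivity : 0 ≤ c * x ^ 2) (by positivity : 0 ≤ d * y ^ 2)
  rw [hcon, one_rpow, mul_one, mul_sq_rpow_half hc.le hx, mul_sq_rpow_half hd.le hy] at key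
  have hwa : a / 2 / (a / 2 + b / 2) = a / (a + b) := by field_simp
  have hwb : b / 2 / (a / 2 + b / 2) = b / (a + b) := by field_simp
  rw [hwa, hwb] at key
  calc x ^ a * y ^ b
        = c ^ (a / 2) * x ^ a * (d ^ (b / 2) * y ^ b) / (c ^ (a / 2) * d ^ (b / 2)) := by
        field_simp
    _ ≤ (a / (a + b)) ^ (a / 2) * (b / (a + b)) ^ (b / 2) / (c ^ (a / 2) * d ^ (b / 2)) := by
        gcongr
    _ = (a / c) ^ (a / 2) * (b / d) ^ (b / 2) / (a + b) ^ ((a + b) / 2) := by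
        rw [add_div a b 2, rpow_add (by positivity), div_rpow ha.le (by positivity),
          div_rpow hb.le (by positivity), div_rpow ha.le hc.le, div_rpow hb.le hd.le]
        field_simp
end

section
/- Let n ≥ 2 and 1 < k ≤ n, and let r > 0. The maximum of f(x,y,z) = (k-1)·x^{2k}·y^r + (n-k)·x^{2k-2}·y^r·z² over x, y, z ≥ 0 subject to (k-1)·x² + y² + (n-k)·z² = 1 equals (2k)^k / (k-1)^{k-1} · (r/(2k+r))^{r/2} · 1/(2k+r)^k. -/
/-!
Under the constraint the objective factors as `(x²)^(k-1) y^r (1 - y²)`, and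
`(k-1) x² ≤ 1 - y²` turns it into at most `(1 - y²)^k (y²)^(r/2) / (k-1)^(k-1)`.
Weighted AM–GM with weights proportional to `k` and `r/2` bounds `u^k t^(r/2)` for
`u + t = 1`, with equality at `u = 2k/(2k+r)`, `t = r/(2k+r)`; taking `z = 0` realises it.
-/

open Real

theorem rpow_mul_rpow_le_of_add_eq_one {a b u t : ℝ} (ha : 0 < a) (hb : 0 < b) (hu : 0 ≤ u)
    (ht : 0 ≤ t) (hut : u + t = 1) :
    u ^ a * t ^ b ≤ (a / (a + b)) ^ a * (b / (a + b)) ^ b := by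
  set s := a + b
  have hs : 0 < s := add_pos ha hb
  set w₁ := a / s
  set w₂ := b / s
  have hw₁ : 0 < w₁ := div_pos ha hs
  have hw₂ : 0 < w₂ := div_pos hb hs
  have hu' : 0 ≤ u / w₁ := div_nonneg hu hw₁.le
  have ht' : 0 ≤ t / w₂ := div_nonneg ht hw₂.le
  have hw : w₁ + w₂ = 1 := by rw [← add_div]; exact div_self hs.ne'
  have amgm : (u / w₁) ^ w₁ * (t / w₂) ^ w₂ ≤ 1 := by
    calc _ ≤ w₁ * (u / w₁) + w₂ * (t / w₂) :=
          geom_mean_le_arith_mean2_weighted hw₁.le hw₂.le hu' ht' hw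
      _ = 1 := by field_simp; exact hut
  have hpow : ((u / w₁) ^ w₁ * (t / w₂) ^ w₂) ^ s = (u / w₁) ^ a * (t / w₂) ^ b := by
    rw [mul_rpow (by positivity) (by positivity), ← rpow_mul hu', ← rpow_mul ht',
      div_mul_cancel₀ _ hs.ne', div_mul_cancel₀ _ hs.ne']
  calc u ^ a * t ^ b = w₁ ^ a * w₂ ^ b * ((u / w₁) ^ a * (t / w₂) ^ b) := by
        rw [div_rpow hu hw₁.le, div_rpow ht hw₂.le]
        field_simp
    _ ≤ w₁ ^ a * w₂ ^ b * 1 := by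
        gcongr
        rw [← hpow]
        exact rpow_le_one (by positivity) amgm hs.le
    _ = _ := mul_one _

theorem pow_mul_rpow_le_of_add_eq_one (k : ℕ) {r u t : ℝ} (hk : 0 < k) (hr : 0 < r)
    (hu : 0 ≤ u) (ht : 0 ≤ t) (hut : u + t = 1) :
    u ^ k * t ^ (r / 2) ≤ (2 * k / (2 * k + r)) ^ k * (r / (2 * k + r)) ^ (r / 2) := by
  have h := rpow_mul_rpow_le_of_add_eq_one (a := k) (b := r / 2) (by positivity) (by positivity)
    hu ht hut
  have e₁ : (k : ℝ) / (k + r / 2) = 2 * k / (2 * k + r) := by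
    rw [div_eq_div_iff (by positivity) (by positivity)]; ring
  have e₂ : r / 2 / (k + r / 2) = r / (2 * k + r) := by
    rw [div_eq_div_iff (by positivity) (by positivity)]; ring
  rwa [rpow_natCast, rpow_natCast, e₁, e₂] at h

noncomputable def objective (n k : ℕ) (r x y z : ℝ) : ℝ :=
  ((k : ℝ) - 1) * x ^ (2 * k) * y ^ r + ((n : ℝ) - k) * x ^ (2 * k - 2) * y ^ r * z ^ 2

noncomputable def maxValue (k : ℕ) (r : ℝ) : ℝ :=
  (2 * (k : ℝ)) ^ k / ((k : ℝ) - 1) ^ (k - 1) * (r / (2 * k + r)) ^ (r / 2) *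
    (1 / (2 * (k : ℝ) + r) ^ k)

section Objective

variable {n k : ℕ} {r x y z : ℝ}

theorem objective_eq_of_constraint (hk : 1 ≤ k)
    (hcon : ((k : ℝ) - 1) * x ^ 2 + y ^ 2 + ((n : ℝ) - k) * z ^ 2 = 1) :
    objective n k r x y z = (x ^ 2) ^ (k - 1) * y ^ r * (1 - y ^ 2) := by
  have hx : x ^ (2 * k - 2) = (x ^ 2) ^ (k - 1) := by rw [← pow_mul]; congr 1; omega
  have hx' : x ^ (2 * k) = (x ^ 2) ^ (k - 1) * x ^ 2 := by rw [← hx, ← pow_add]; congr 1; omega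
  rw [objective, hx, hx']
  linear_combination (x ^ 2) ^ (k - 1) * y ^ r * hcon

theorem objective_le (hk : 1 < k) (hkn : k ≤ n) (hr : 0 < r) (hy : 0 ≤ y)
    (hcon : ((k : ℝ) - 1) * x ^ 2 + y ^ 2 + ((n : ℝ) - k) * z ^ 2 = 1) :
    objective n k r x y z ≤ maxValue k r := by
  have hk₁ : (0 : ℝ) < k - 1 := by rw [sub_pos]; exact_mod_cast hk
  have hnk : (0 : ℝ) ≤ n - k := by rw [sub_nonneg]; exact_mod_cast hkn
  have hxu : x ^ 2 ≤ (1 - y ^ 2) / (k - 1) := by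
    rw [le_div_iff₀' hk₁]; nlinarith [mul_nonneg hnk (sq_nonneg z)]
  have hu : 0 ≤ 1 - y ^ 2 := by nlinarith [mul_nonneg hk₁.le (sq_nonneg x)]
  have hyr : y ^ r = (y ^ 2) ^ (r / 2) := by
    rw [← rpow_natCast, ← rpow_mul hy]; push_cast; ring_nf
  have hu_pow : (1 - y ^ 2) ^ k = (1 - y ^ 2) ^ (k - 1) * (1 - y ^ 2) := by
    rw [← pow_succ, Nat.sub_add_cancel hk.le]
  rw [objective_eq_of_constraint hk.le hcon]
  calc (x ^ 2) ^ (k - 1) * y ^ r * (1 - y ^ 2)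
      ≤ ((1 - y ^ 2) / (k - 1)) ^ (k - 1) * y ^ r * (1 - y ^ 2) := by gcongr
    _ = (1 - y ^ 2) ^ k * (y ^ 2) ^ (r / 2) / ((k : ℝ) - 1) ^ (k - 1) := by
        rw [hyr, div_pow, hu_pow]; ring
    _ ≤ (2 * k / (2 * k + r)) ^ k * (r / (2 * k + r)) ^ (r / 2) / ((k : ℝ) - 1) ^ (k - 1) := by
        gcongr ?_ / _
        exact pow_mul_rpow_le_of_add_eq_one k (by omega) hr hu (sq_nonneg y) (by ring)
    _ = maxValue k r := by rw [maxValue, div_pow]; ring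

theorem constraint_at_maximizer (hk : 1 < k) (hr : 0 < r) :
    ((k : ℝ) - 1) * √(2 * k / ((2 * k + r) * (k - 1))) ^ 2 + √(r / (2 * k + r)) ^ 2
      + ((n : ℝ) - k) * 0 ^ 2 = 1 := by
  have hk₁ : (0 : ℝ) < k - 1 := by rw [sub_pos]; exact_mod_cast hk
  rw [sq_sqrt (by positivity), sq_sqrt (by positivity)]
  field_simp
  ring

theorem objective_at_maximizer (hk : 1 < k) (hr : 0 < r) :
    objective n k r √(2 * k / ((2 * k + r) * (k - 1))) √(r / (2 * k + r)) 0 = maxValue k r := by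
  have hk₁ : (0 : ℝ) < k - 1 := by rw [sub_pos]; exact_mod_cast hk
  have hx : √(2 * k / ((2 * k + r) * (k - 1))) ^ (2 * k)
      = (2 * k / ((2 * k + r) * (k - 1))) ^ k := by
    rw [pow_mul, sq_sqrt (by positivity)]
  have hy : √(r / (2 * k + r)) ^ r = (r / (2 * k + r)) ^ (r / 2) := by
    rw [sqrt_eq_rpow, ← rpow_mul (by positivity)]; ring_nf
  have hk' : ((k : ℝ) - 1) ^ k = ((k : ℝ) - 1) ^ (k - 1) * (k - 1) := by
    rw [← pow_succ, Nat.sub_add_cancel hk.le]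
  rw [objective, maxValue, hx, hy, div_pow, mul_pow (2 * (k : ℝ) + r), hk']
  field_simp
  ring

end Objective

theorem stmt_2_general (n k : ℕ) (hk1 : 1 < k) (hkn : k ≤ n) (r : ℝ) (hr : 0 < r) :
    IsGreatest {v : ℝ | ∃ x y z : ℝ, 0 ≤ x ∧ 0 ≤ y ∧ 0 ≤ z ∧
        ((k : ℝ) - 1) * x ^ 2 + y ^ 2 + ((n : ℝ) - k) * z ^ 2 = 1 ∧
        v = ((k : ℝ) - 1) * x ^ (2 * k) * y ^ r + ((n : ℝ) - k) * x ^ (2 * k - 2) * y ^ r * z ^ 2}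
      ((2 * (k : ℝ)) ^ k / ((k : ℝ) - 1) ^ (k - 1) * (r / (2 * k + r)) ^ (r / 2) *
        (1 / (2 * (k : ℝ) + r) ^ k)) := by
  constructor
  · exact ⟨_, _, 0, sqrt_nonneg _, sqrt_nonneg _, le_rfl, constraint_at_maximizer hk1 hr,
      (objective_at_maximizer hk1 hr).symm⟩
  · rintro v ⟨x, y, z, -, hy, -, hcon, rfl⟩
    exact objective_le hk1 hkn hr hy hcon

theorem stmt_2 (n k : ℕ) (hn : 2 ≤ n) (hk1 : 1 < k) (hkn : k ≤ n) (r : ℝ) (hr : 0 < r) :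
    IsGreatest {v : ℝ | ∃ x y z : ℝ, 0 ≤ x ∧ 0 ≤ y ∧ 0 ≤ z ∧
        ((k : ℝ) - 1) * x ^ 2 + y ^ 2 + ((n : ℝ) - k) * z ^ 2 = 1 ∧
        v = ((k : ℝ) - 1) * x ^ (2 * k) * y ^ r + ((n : ℝ) - k) * x ^ (2 * k - 2) * y ^ r * z ^ 2}
      ((2 * (k : ℝ)) ^ k / ((k : ℝ) - 1) ^ (k - 1) * (r / (2 * k + r)) ^ (r / 2) *
        (1 / (2 * (k : ℝ) + r) ^ k)) :=
  stmt_2_general n k hk1 hkn r hr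
end

section
/- For every integer k ≥ 1 there exists a constant C_k such that for all r > 0 and all ξ on the unit sphere of ℝ^n with all coordinates nonnegative, r·(r+2)···(r+2k-2)·ξ₁^r·ξ_{i₁}²···ξ_{i_k}² ≤ C_k, where i₁,...,i_k are distinct indices different from 1. -/
open Real Finset

/-- For `u ≥ 0`, `u^k ≤ 2^k * k! * exp (u/2)`. -/
lemma aux_pow_le_exp (k : ℕ) {u : ℝ} (hu : 0 ≤ u) :
    u ^ k ≤ 2 ^ k * k.factorial * Real.exp (u / 2) := by
  have h1 : (u / 2) ^ k / k.factorial ≤ Real.exp (u / 2) := by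
    have := Real.sum_le_exp_of_nonneg (x := u / 2) (by positivity) (k + 1)
    refine le_trans ?_ this
    calc (u / 2) ^ k / k.factorial
        = ∑ i ∈ {k}, (u/2) ^ i / (i.factorial : ℝ) := by simp
      _ ≤ ∑ i ∈ Finset.range (k+1), (u/2) ^ i / (i.factorial : ℝ) := by
          apply Finset.sum_le_sum_of_subset_of_nonneg
          · simp
          · intro i _ _; positivity
  have h2 : u ^ k = 2 ^ k * (u / 2) ^ k := by
    rw [div_pow]; field_simp
  rw [h2]
  calc 2 ^ k * (u / 2) ^ k ≤ 2 ^ k * (k.factorial * Real.exp (u / 2)) := by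
        apply mul_le_mul_of_nonneg_left _ (by positivity)
        rw [div_le_iff₀] at h1 <;> [linarith [h1]; positivity]
    _ = 2 ^ k * k.factorial * Real.exp (u / 2) := by ring

theorem stmt_3 (k : ℕ) (hk : 1 ≤ k) :
    ∃ C : ℝ, ∀ (n : ℕ) (hn : 0 < n) (ξ : EuclideanSpace ℝ (Fin n)),
      ‖ξ‖ = 1 → (∀ i, 0 ≤ ξ i) →
      ∀ r : ℝ, 0 < r →
      ∀ idx : Fin k → Fin n, Function.Injective idx →
        (∀ j, idx j ≠ ⟨0, hn⟩) →
        (∏ j : Fin k, (r + 2 * (j : ℝ))) * ξ ⟨0, hn⟩ ^ r *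
          ∏ j : Fin k, ξ (idx j) ^ 2 ≤ C := by
  refine ⟨2 ^ k * (2 ^ k * k.factorial + (2 * k) ^ k), ?_⟩
  intro n hn ξ hξ hpos r hr idx hinj hne
  set a := ξ ⟨0, hn⟩ with ha
  have ha0 : 0 ≤ a := hpos _
  have hsum : ∑ i, ξ i ^ 2 = 1 := by
    have := EuclideanSpace.norm_eq ξ
    rw [hξ] at this
    have h2 : Real.sqrt (∑ i, ‖ξ i‖ ^ 2) = 1 := this.symm
    have hnn : 0 ≤ ∑ i, ‖ξ i‖ ^ 2 := Finset.sum_nonneg fun i _ => by positivity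
    have h3 : ∑ i, ‖ξ i‖ ^ 2 = 1 := by
      nlinarith [Real.sq_sqrt hnn, h2]
    simpa [Real.norm_eq_abs, sq_abs] using h3
  set t := 1 - a ^ 2 with hta
  have hpair : ∀ j : Fin k, a ^ 2 + ξ (idx j) ^ 2 ≤ 1 := by
    intro j
    have heq : a ^ 2 + ξ (idx j) ^ 2 = ∑ i ∈ ({⟨0, hn⟩, idx j} : Finset (Fin n)), ξ i ^ 2 := by
      rw [Finset.sum_pair (Ne.symm (hne j))]
    rw [heq, ← hsum]
    exact Finset.sum_le_sum_of_subset_of_nonneg (by simp) (fun i _ _ => by positivity)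
  have ht0 : 0 ≤ t := by have := hpair ⟨0, hk⟩; nlinarith [sq_nonneg (ξ (idx ⟨0, hk⟩))]
  have ht1 : t ≤ 1 := by nlinarith [sq_nonneg a]
  have hjt : ∀ j : Fin k, ξ (idx j) ^ 2 ≤ t := fun j => by have := hpair j; linarith
  -- bound the products
  have hP : (∏ j : Fin k, (r + 2 * (j : ℝ))) ≤ (r + 2 * k) ^ k := by
    calc ∏ j : Fin k, (r + 2 * (j : ℝ)) ≤ ∏ _j : Fin k, (r + 2 * (k:ℝ)) := by
          apply Finset.prod_le_prod
          · intro j _; have : (0:ℝ) ≤ (j:ℝ) := Nat.cast_nonneg _; linarith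
          · intro j _; have : (j:ℝ) ≤ k := by exact_mod_cast (j.2.le)
            linarith
      _ = (r + 2 * k) ^ k := by rw [Finset.prod_const, Finset.card_univ, Fintype.card_fin]
  have hQ : (∏ j : Fin k, ξ (idx j) ^ 2) ≤ t ^ k := by
    calc ∏ j : Fin k, ξ (idx j) ^ 2 ≤ ∏ _j : Fin k, t :=
          Finset.prod_le_prod (fun j _ => by positivity) (fun j _ => hjt j)
      _ = t ^ k := by rw [Finset.prod_const, Finset.card_univ, Fintype.card_fin]
  have hPnn : (0:ℝ) ≤ ∏ j : Fin k, (r + 2 * (j : ℝ)) :=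
    Finset.prod_nonneg fun j _ => by have : (0:ℝ) ≤ (j:ℝ) := Nat.cast_nonneg _; linarith
  have harnn : (0:ℝ) ≤ a ^ r := Real.rpow_nonneg ha0 r
  have hQnn : (0:ℝ) ≤ ∏ j : Fin k, ξ (idx j) ^ 2 :=
    Finset.prod_nonneg fun j _ => by positivity
  -- a ^ r ≤ exp (-(r*t)/2)
  have har : a ^ r ≤ Real.exp (-(r * t) / 2) := by
    have h1 : a ^ r = (a ^ 2 : ℝ) ^ (r / 2) := by
      rw [← Real.rpow_natCast a 2, ← Real.rpow_mul ha0]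
      congr 1
      push_cast
      ring
    have h2 : (a ^ 2 : ℝ) ≤ Real.exp (-t) := by
      have := Real.add_one_le_exp (-t)
      have : a ^ 2 = 1 - t := by rw [hta]; ring
      rw [this]
      linarith [Real.add_one_le_exp (-t)]
    have h3 : (a ^ 2 : ℝ) ^ (r / 2) ≤ (Real.exp (-t)) ^ (r / 2) :=
      Real.rpow_le_rpow (by positivity) h2 (by positivity)
    rw [h1]
    calc (a ^ 2 : ℝ) ^ (r / 2) ≤ (Real.exp (-t)) ^ (r / 2) := h3
      _ = Real.exp (-(r * t) / 2) := by
          rw [← Real.exp_mul]; ring_nf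
  set u := r * t with hu
  have hu0 : 0 ≤ u := mul_nonneg hr.le ht0
  -- (r+2k)^k * t^k ≤ (u + 2k)^k
  have hkey : (r + 2 * k) ^ k * t ^ k ≤ (u + 2 * k) ^ k := by
    rw [← mul_pow]
    apply pow_le_pow_left₀ (by positivity)
    nlinarith
  have hmain : (∏ j : Fin k, (r + 2 * (j : ℝ))) * a ^ r * ∏ j : Fin k, ξ (idx j) ^ 2
      ≤ (u + 2 * k) ^ k * Real.exp (-u / 2) := by
    calc (∏ j : Fin k, (r + 2 * (j : ℝ))) * a ^ r * ∏ j : Fin k, ξ (idx j) ^ 2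
        ≤ (r + 2 * k) ^ k * Real.exp (-(r*t)/2) * t ^ k := by
          apply mul_le_mul (mul_le_mul hP har harnn (by positivity)) hQ hQnn
          positivity
      _ = (r + 2 * k) ^ k * t ^ k * Real.exp (-u / 2) := by rw [hu]; ring
      _ ≤ (u + 2 * k) ^ k * Real.exp (-u / 2) :=
          mul_le_mul_of_nonneg_right hkey (Real.exp_nonneg _)
  refine hmain.trans ?_
  -- (u+2k)^k exp(-u/2) ≤ 2^k (2^k k! + (2k)^k)
  have hmax : u + 2 * k ≤ 2 * max u (2 * k) := by
    have h1 : u ≤ max u (2*k) := le_max_left _ _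
    have h2 : 2 * (k:ℝ) ≤ max u (2 * k) := le_max_right _ _
    linarith
  have hmaxnn : (0:ℝ) ≤ max u (2 * k) := le_trans hu0 (le_max_left _ _)
  have h4 : (u + 2 * k) ^ k ≤ 2 ^ k * (u ^ k + (2 * k) ^ k) := by
    calc (u + 2 * k) ^ k ≤ (2 * max u (2 * k)) ^ k :=
          pow_le_pow_left₀ (by positivity) hmax k
      _ = 2 ^ k * (max u (2 * k)) ^ k := by rw [mul_pow]
      _ ≤ 2 ^ k * (u ^ k + (2 * k) ^ k) := by
          apply mul_le_mul_of_nonneg_left _ (by positivity)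
          rcases max_cases u (2 * (k:ℝ)) with ⟨h, _⟩ | ⟨h, _⟩ <;> rw [h] <;> nlinarith [pow_nonneg hu0 k, pow_nonneg (by positivity : (0:ℝ) ≤ 2 * (k:ℝ)) k]
  have hexp1 : Real.exp (-u / 2) ≤ 1 := Real.exp_le_one_iff.mpr (by linarith)
  have hexp0 : 0 ≤ Real.exp (-u / 2) := (Real.exp_pos _).le
  have h5 : u ^ k * Real.exp (-u / 2) ≤ 2 ^ k * k.factorial := by
    have := aux_pow_le_exp k hu0
    calc u ^ k * Real.exp (-u / 2)
        ≤ (2 ^ k * k.factorial * Real.exp (u / 2)) * Real.exp (-u / 2) :=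
          mul_le_mul_of_nonneg_right this hexp0
      _ = 2 ^ k * k.factorial * Real.exp (u / 2 + -u / 2) := by rw [Real.exp_add]; ring
      _ = 2 ^ k * k.factorial := by
          rw [show u / 2 + -u / 2 = (0:ℝ) by ring, Real.exp_zero, mul_one]
  calc (u + 2 * k) ^ k * Real.exp (-u / 2)
      ≤ (2 ^ k * (u ^ k + (2 * k) ^ k)) * Real.exp (-u / 2) :=
        mul_le_mul_of_nonneg_right h4 hexp0
    _ = 2 ^ k * (u ^ k * Real.exp (-u/2) + (2 * k) ^ k * Real.exp (-u/2)) := by ring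
    _ ≤ 2 ^ k * (2 ^ k * k.factorial + (2 * k) ^ k) := by
        apply mul_le_mul_of_nonneg_left _ (by positivity)
        have h6 : (2 * (k:ℝ)) ^ k * Real.exp (-u/2) ≤ (2*k)^k := by
          nlinarith [pow_nonneg (by positivity : (0:ℝ) ≤ 2*(k:ℝ)) k]
        push_cast
        linarith
end

section
/- Let n ≥ 2 and n₀ = ⌊n/2⌋ + 1. There exists a constant C_n such that for all real r ≥ n₀, (Γ((r+n)/2)/Γ((r+1)/2)) · (Γ((r-n₀+1)/2)/Γ((r-n₀+n)/2)) ≤ C_n. -/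
/-!
With `y = (r - n₀ + 1)/2 ≥ 1/2`, `a = n₀/2` and `d = (n - 1)/2 > 0` the quantity is
`Γ(y + a + d) Γ(y) / (Γ(y + a) Γ(y + d))`. Log-convexity of `Γ` compares the slope of `log Γ`
on `[z, z + d]` with its slope `log z` on the adjacent unit intervals, giving
`Γ(y + a + d) ≤ Γ(y + a) (y + a + d)^d` and `Γ(y) y^d y ≤ Γ(y + d) (y + d)`.
Hence the quantity is at most `((y + a + d)/y)^d (y + d)/y`, which is bounded once `y` is
bounded away from `0`.
-/

open Real

namespace Real

lemma log_Gamma_add_one {z : ℝ} (hz : 0 < z) :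
    log (Gamma (z + 1)) = log (Gamma z) + log z := by
  rw [Gamma_add_one hz.ne', log_mul hz.ne' (Gamma_pos_of_pos hz).ne', add_comm]

theorem Gamma_add_le_Gamma_mul_rpow {z d : ℝ} (hz : 0 < z) (hd : 0 < d) :
    Gamma (z + d) ≤ Gamma z * (z + d) ^ d := by
  have hzd : 0 < z + d := by positivity
  have hslope := convexOn_log_Gamma.slope_mono_adjacent (x := z) (y := z + d) (z := z + d + 1)
    hz (Set.mem_Ioi.2 (by positivity)) (by linarith) (by linarith)
  simp only [Function.comp_apply, log_Gamma_add_one hzd, add_sub_cancel_left, div_one,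
    div_le_iff₀ hd] at hslope
  rw [← log_le_log_iff (Gamma_pos_of_pos hzd) (by positivity),
    log_mul (Gamma_pos_of_pos hz).ne' (rpow_pos_of_pos hzd d).ne', log_rpow hzd]
  linarith

theorem Gamma_add_one_mul_rpow_le_Gamma {z d : ℝ} (hz : 0 < z) (hd : 0 < d) :
    Gamma (z + 1) * z ^ d ≤ Gamma (z + 1 + d) := by
  have hslope := convexOn_log_Gamma.slope_mono_adjacent (x := z) (y := z + 1) (z := z + 1 + d)
    hz (Set.mem_Ioi.2 (by positivity)) (by linarith) (by linarith)
  simp only [Function.comp_apply, log_Gamma_add_one hz, add_sub_cancel_left, div_one,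
    le_div_iff₀ hd] at hslope
  rw [← log_le_log_iff (by positivity) (Gamma_pos_of_pos (by positivity)),
    log_mul (Gamma_pos_of_pos (by positivity)).ne' (rpow_pos_of_pos hz d).ne', log_rpow hz,
    log_Gamma_add_one hz]
  linarith

theorem Gamma_add_add_div_mul_div_le {y a d : ℝ} (hy : 0 < y) (ha : 0 ≤ a) (hd : 0 < d) :
    Gamma (y + a + d) / Gamma (y + a) * (Gamma y / Gamma (y + d)) ≤
      ((y + a + d) / y) ^ d * ((y + d) / y) := by
  have hya : 0 < y + a := by positivity
  have hyd : 0 < y + d := by positivity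
  have upper : Gamma (y + a + d) / Gamma (y + a) ≤ (y + a + d) ^ d := by
    rw [div_le_iff₀' (Gamma_pos_of_pos hya)]
    exact Gamma_add_le_Gamma_mul_rpow hya hd
  have lower : Gamma y / Gamma (y + d) ≤ (y + d) / (y ^ d * y) := by
    rw [div_le_div_iff₀ (Gamma_pos_of_pos hyd) (by positivity), mul_comm (y + d), ← mul_assoc]
    calc Gamma y * y ^ d * y = Gamma (y + 1) * y ^ d := by rw [Gamma_add_one hy.ne']; ring
      _ ≤ Gamma (y + 1 + d) := Gamma_add_one_mul_rpow_le_Gamma hy hd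
      _ = Gamma (y + d) * (y + d) := by rw [add_right_comm, Gamma_add_one hyd.ne', mul_comm]
  calc _ ≤ (y + a + d) ^ d * ((y + d) / (y ^ d * y)) :=
        mul_le_mul upper lower (by positivity) (by positivity)
    _ = ((y + a + d) / y) ^ d * ((y + d) / y) := by
        rw [div_rpow (by positivity) hy.le]
        field_simp

theorem Gamma_add_add_div_mul_div_le_of_le {y a d c : ℝ} (hc : 0 < c) (hy : c ≤ y)
    (ha : 0 ≤ a) (hd : 0 < d) :
    Gamma (y + a + d) / Gamma (y + a) * (Gamma y / Gamma (y + d)) ≤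
      (1 + (a + d) / c) ^ d * (1 + d / c) := by
  have hy0 : 0 < y := hc.trans_le hy
  calc _ ≤ ((y + a + d) / y) ^ d * ((y + d) / y) := Gamma_add_add_div_mul_div_le hy0 ha hd
    _ = (1 + (a + d) / y) ^ d * (1 + d / y) := by
        rw [one_add_div hy0.ne', one_add_div hy0.ne', add_assoc]
    _ ≤ (1 + (a + d) / c) ^ d * (1 + d / c) := by gcongr

end Real

theorem stmt_7 (n : ℕ) (hn : 2 ≤ n) :
    ∃ C : ℝ, ∀ r : ℝ, (n / 2 + 1 : ℕ) ≤ r →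
      Real.Gamma ((r + n) / 2) / Real.Gamma ((r + 1) / 2) *
        (Real.Gamma ((r - (n / 2 + 1 : ℕ) + 1) / 2) /
          Real.Gamma ((r - (n / 2 + 1 : ℕ) + n) / 2)) ≤ C := by
  set n₀ : ℕ := n / 2 + 1
  have hd : (0 : ℝ) < (n - 1) / 2 := by
    have : (2 : ℝ) ≤ n := by exact_mod_cast hn
    linarith
  refine ⟨(1 + (n₀ / 2 + (n - 1) / 2) / (1 / 2)) ^ (((n : ℝ) - 1) / 2) *
    (1 + (n - 1) / 2 / (1 / 2)), fun r hr => ?_⟩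
  have hy : (1 : ℝ) / 2 ≤ (r - n₀ + 1) / 2 := by linarith
  have ha : (0 : ℝ) ≤ n₀ / 2 := by positivity
  convert Gamma_add_add_div_mul_div_le_of_le one_half_pos hy ha hd using 4 <;> ring
end
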